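/- (Primal–dual equivalence of the backward-pass LMI, Section 4.2.) Let n, m, d be natural numbers. Let P be a symmetric invertible real (1+n)×(1+n) matrix, and let M and Q be symmetric invertible real (1+n+m+d)×(1+n+m+d) matrices, each partitioned into block rows and columns of sizes 1, n, m, d (blocks indexed 1 to 4). Let k¹ ∈ ℝᵐ, K² a real m×n matrix. Let rev(X) denote the matrix obtained from a (1+n+m+d)×(1+n+m+d) matrix X by simultaneously permuting its rows and columns so that the four blocks appear in reversed order (d, m, n, 1). Let 𝒫 be the block-diagonal matrix with diagonal blocks −P, rev(M), Q (of sizes 1+n, 1+n+m+d, 1+n+m+d). Let W be the ((m+n+1)+(1+n+m+d))×(1+n+d) real matrix whose row blocks, acting on (τ,a,b) ∈ ℝ×ℝⁿ×ℝᵈ, are in order: (k¹, K², 0); (0, I_n, 0); (1, 0, 0); (1, 0, 0); (0, I_n, 0); (k¹, K², 0); (0, 0, I_d), and let 𝒲 be the vertical stack of the identity I_{1+n+d} on top of W. Assume the regularity condition: the leading principal (1+n+m)×(1+n+m) submatrix of M is positive definite and Q is positive definite. Then the primal matrix inequality [𝒲ᵀ𝒫𝒲 is negative definite] holds if and only if all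 of the following hold: (a) 𝒟ᵀ𝒫⁻¹𝒟 is positive definite, where 𝒟 is the vertical stack of Wᵀ on top of −I_{(m+n+1)+(1+n+m+d)}; (b) P⁻¹ is positive definite; and (c) the trailing principal d×d block (the (4,4) block) of M⁻¹ is negative definite. -/

import Mathlib

open Matrix

/-- Index type of a `(1+n+m+d)` vector with block order `(1, n, m, d)`. -/
abbrev Idx (n m d : ℕ) := Unit ⊕ (Fin n ⊕ (Fin m ⊕ Fin d))

/-- Index type of a `(1+n+m+d)` vector with the reversed block order `(d, m, n, 1)`. -/
abbrev RevIdx (n m d : ℕ) := Fin d ⊕ (Fin m ⊕ (Fin n ⊕ Unit))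

/-- Index type for `η = (1, δx)`, of size `1+n`. -/
abbrev EtaIdx (n : ℕ) := Unit ⊕ Fin n

/-- Index type for `(τ, a, b) ∈ ℝ × ℝⁿ × ℝᵈ`, of size `1+n+d`. -/
abbrev TabIdx (n d : ℕ) := Unit ⊕ (Fin n ⊕ Fin d)

/-- Row index type of the matrix `W`: seven row blocks of sizes
`m, n, 1, 1, n, m, d`. -/
abbrev WIdx (n m d : ℕ) := (Fin m ⊕ (Fin n ⊕ Unit)) ⊕ Idx n m d

/-- Index type of the block-diagonal matrix `𝒫 = diag(-P, rev(M), Q)`,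
written as `(1+n+d) + ((m+n+1) + (1+n+m+d))` to match the row structure of
`𝒲 = [I; W]`. -/
abbrev OmIdx (n m d : ℕ) := TabIdx n d ⊕ WIdx n m d

/-- The block reversal map: sends an index of the `(d,m,n,1)`-ordered vector to
the corresponding index of the `(1,n,m,d)`-ordered vector. -/
def flipIdx {n m d : ℕ} : RevIdx n m d → Idx n m d
  | Sum.inl p => Sum.inr (Sum.inr (Sum.inr p))
  | Sum.inr (Sum.inl p) => Sum.inr (Sum.inr (Sum.inl p))
  | Sum.inr (Sum.inr (Sum.inl p)) => Sum.inr (Sum.inl p)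
  | Sum.inr (Sum.inr (Sum.inr u)) => Sum.inl u

/-- `rev(X)`: simultaneous permutation of rows and columns of `X` so that the
four blocks appear in reversed order `(d, m, n, 1)`. -/
def revMat {n m d : ℕ} (X : Matrix (Idx n m d) (Idx n m d) ℝ) :
    Matrix (RevIdx n m d) (RevIdx n m d) ℝ :=
  X.submatrix flipIdx flipIdx

/-- The identification of `OmIdx` with the index type of
`diag(-P, rev(M), Q)` partitioned as `(1+n) + ((1+n+m+d) + (1+n+m+d))`. -/
def phiIdx {n m d : ℕ} : OmIdx n m d → EtaIdx n ⊕ (RevIdx n m d ⊕ Idx n m d)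
  | Sum.inl (Sum.inl u) => Sum.inl (Sum.inl u)
  | Sum.inl (Sum.inr (Sum.inl a)) => Sum.inl (Sum.inr a)
  | Sum.inl (Sum.inr (Sum.inr b)) => Sum.inr (Sum.inl (Sum.inl b))
  | Sum.inr (Sum.inl v) => Sum.inr (Sum.inl (Sum.inr v))
  | Sum.inr (Sum.inr q) => Sum.inr (Sum.inr q)

/-- The block-diagonal matrix `𝒫 = diag(-P, rev(M), Q)`, reindexed along the
row structure of `𝒲`. -/
def calP {n m d : ℕ} (P : Matrix (EtaIdx n) (EtaIdx n) ℝ)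
    (M Q : Matrix (Idx n m d) (Idx n m d) ℝ) :
    Matrix (OmIdx n m d) (OmIdx n m d) ℝ :=
  (fromBlocks (-P) 0 0 (fromBlocks (revMat M) 0 0 Q)).submatrix phiIdx phiIdx

/-- The matrix `W` whose row blocks, acting on `(τ,a,b)`, are in order:
`(k¹,K²,0); (0,I_n,0); (1,0,0); (1,0,0); (0,I_n,0); (k¹,K²,0); (0,0,I_d)`. -/
def Wmat {n m d : ℕ} (k1 : Fin m → ℝ) (K2 : Matrix (Fin m) (Fin n) ℝ) :
    Matrix (WIdx n m d) (TabIdx n d) ℝ :=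
  Matrix.of fun r c =>
    match r, c with
    | Sum.inl (Sum.inl i), Sum.inl _ => k1 i
    | Sum.inl (Sum.inl i), Sum.inr (Sum.inl j) => K2 i j
    | Sum.inl (Sum.inl _), Sum.inr (Sum.inr _) => 0
    | Sum.inl (Sum.inr (Sum.inl i)), Sum.inr (Sum.inl j) => if i = j then (1 : ℝ) else 0
    | Sum.inl (Sum.inr (Sum.inl _)), _ => 0
    | Sum.inl (Sum.inr (Sum.inr _)), Sum.inl _ => 1
    | Sum.inl (Sum.inr (Sum.inr _)), _ => 0
    | Sum.inr (Sum.inl _), Sum.inl _ => 1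
    | Sum.inr (Sum.inl _), _ => 0
    | Sum.inr (Sum.inr (Sum.inl i)), Sum.inr (Sum.inl j) => if i = j then (1 : ℝ) else 0
    | Sum.inr (Sum.inr (Sum.inl _)), _ => 0
    | Sum.inr (Sum.inr (Sum.inr (Sum.inl i))), Sum.inl _ => k1 i
    | Sum.inr (Sum.inr (Sum.inr (Sum.inl i))), Sum.inr (Sum.inl j) => K2 i j
    | Sum.inr (Sum.inr (Sum.inr (Sum.inl _))), Sum.inr (Sum.inr _) => 0
    | Sum.inr (Sum.inr (Sum.inr (Sum.inr i))), Sum.inr (Sum.inr j) => if i = j then (1 : ℝ) else 0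
    | Sum.inr (Sum.inr (Sum.inr (Sum.inr _))), _ => 0

/-- `𝒲`: the vertical stack of the identity `I_{1+n+d}` on top of `W`. -/
def calW {n m d : ℕ} (k1 : Fin m → ℝ) (K2 : Matrix (Fin m) (Fin n) ℝ) :
    Matrix (OmIdx n m d) (TabIdx n d) ℝ :=
  fromRows (1 : Matrix (TabIdx n d) (TabIdx n d) ℝ) (Wmat k1 K2)

/-- `𝒟`: the vertical stack of `Wᵀ` on top of `-I`. -/
def calD {n m d : ℕ} (k1 : Fin m → ℝ) (K2 : Matrix (Fin m) (Fin n) ℝ) :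
    Matrix (OmIdx n m d) (WIdx n m d) ℝ :=
  fromRows (Wmat k1 K2)ᵀ (-(1 : Matrix (WIdx n m d) (WIdx n m d) ℝ))

/-- Embedding of the leading principal `(1+n+m)` block of a `(1+n+m+d)`-indexed
matrix. -/
def leadIdx {n m d : ℕ} : (Unit ⊕ (Fin n ⊕ Fin m)) → Idx n m d
  | Sum.inl u => Sum.inl u
  | Sum.inr (Sum.inl p) => Sum.inr (Sum.inl p)
  | Sum.inr (Sum.inr p) => Sum.inr (Sum.inr (Sum.inl p))

/-- Embedding of the trailing principal `d×d` (the `(4,4)`) block of a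
`(1+n+m+d)`-indexed matrix. -/
def tailIdx {n m d : ℕ} : Fin d → Idx n m d :=
  fun i => Sum.inr (Sum.inr (Sum.inr i))

/-!
Dualization: let `A` be symmetric and invertible, negative definite on the range of `U` and
positive definite on the range of `X`, where `U` and `X` together have as many columns as `A`
has rows. If `Uᵀ V = 0` and `V` is injective, then `Vᵀ A⁻¹ V ≻ 0`. Indeed, for `v = V y ≠ 0`
write `A⁻¹ v = U a + X b`; since `(U a)ᵀ v = 0` the cross terms cancel and
`vᵀ A⁻¹ v = (X b)ᵀ A (X b) - (U a)ᵀ A (U a) > 0`.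

Forward direction: take `A = 𝒫`, `U = 𝒲`, `V = 𝒟`, and for `X` the coordinates of the leading
block of `rev(M)` and of `Q`, on which `𝒫` is positive definite by the regularity condition.
On `𝒲 (τ, a, b)` the form of `𝒫` is `-ηᵀ P η + ξᵀ M ξ + ξᵀ Q ξ` with `η = (τ, a)` and
`ξ = (τ, a, k¹τ + K²a, b)`; at `b = 0` this forces `P ≻ 0`, at `(τ, a) = 0` it forces
`M₄₄ ≺ 0`, and dualizing `-M` (negative on the leading block, positive on the trailing one)
gives `(M⁻¹)₄₄ ≺ 0`. Backward direction: take `A = -𝒫⁻¹`, `U = 𝒟`, `V = 𝒲`, and for `X` the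
coordinates of `P⁻¹` and of the trailing block of `rev(M⁻¹)`.
-/

namespace Matrix

section Semiring

variable {N ι κ S : Type*} [Fintype N] [CommSemiring S]

lemma dotProduct_transpose_mul_mul_mulVec [Fintype ι] (A : Matrix N N S) (U : Matrix N ι S)
    (x : ι → S) : x ⬝ᵥ (Uᵀ * A * U) *ᵥ x = (U *ᵥ x) ⬝ᵥ A *ᵥ (U *ᵥ x) := by
  rw [← mulVec_mulVec, ← mulVec_mulVec, dotProduct_mulVec, vecMul_transpose]

lemma dotProduct_submatrix_equiv_mulVec [Fintype ι] (B : Matrix N N S) (e : ι ≃ N) (w : ι → S) :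
    w ⬝ᵥ B.submatrix e e *ᵥ w = (w ∘ e.symm) ⬝ᵥ B *ᵥ (w ∘ e.symm) := by
  rw [submatrix_mulVec_equiv, comp_equiv_symm_dotProduct]

lemma sumElim_dotProduct_fromBlocks_zero_mulVec [Fintype ι] [Fintype κ] (A : Matrix ι ι S)
    (D : Matrix κ κ S) (x : ι → S) (y : κ → S) :
    Sum.elim x y ⬝ᵥ fromBlocks A 0 0 D *ᵥ Sum.elim x y = x ⬝ᵥ A *ᵥ x + y ⬝ᵥ D *ᵥ y := by
  simp [fromBlocks_mulVec, sumElim_dotProduct_sumElim]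

lemma dotProduct_mulVec_eq_submatrix_of_eq_zero [Fintype ι] (B : Matrix N N S) {f : ι → N}
    (hf : Function.Injective f) {x : N → S} (hx : ∀ i ∉ Set.range f, x i = 0) :
    x ⬝ᵥ B *ᵥ x = (x ∘ f) ⬝ᵥ B.submatrix f f *ᵥ (x ∘ f) := by
  have hBx : ∀ i, (B *ᵥ x) i = (B.submatrix id f *ᵥ (x ∘ f)) i := fun i =>
    (Fintype.sum_of_injective f hf _ _ (fun j hj => by simp [hx j hj]) fun _ => rfl).symm
  refine (Fintype.sum_of_injective f hf _ _ (fun i hi => by simp [hx i hi]) fun i => ?_).symm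
  rw [hBx]
  rfl

variable [DecidableEq N]

lemma transpose_submatrix_one_mul_mul_submatrix_one (B : Matrix N N S) (f : ι → N) (g : κ → N) :
    ((1 : Matrix N N S).submatrix id f)ᵀ * B * (1 : Matrix N N S).submatrix id g =
      B.submatrix f g := by
  ext i j
  simp [mul_apply, one_apply]

omit [Fintype N] in
lemma submatrix_one_mulVec_injective [Fintype ι] {f : ι → N} (hf : Function.Injective f) :
    Function.Injective ((1 : Matrix N N S).submatrix id f).mulVec := by
  classical
  intro c c' h
  funext j
  simpa [mulVec, dotProduct, one_apply, hf.eq_iff] using congrFun h (f j)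

end Semiring

lemma inv_neg {N S : Type*} [Fintype N] [DecidableEq N] [CommRing S] (A : Matrix N N S) :
    (-A)⁻¹ = -A⁻¹ := by
  by_cases h : IsUnit A
  · exact inv_eq_right_inv (by rw [neg_mul_neg, mul_nonsing_inv _ ((isUnit_iff_isUnit_det A).mp h)])
  · rw [nonsing_inv_eq_ringInverse, nonsing_inv_eq_ringInverse, Ring.inverse_non_unit _ h,
      Ring.inverse_non_unit _ (by rwa [IsUnit.neg_iff]), neg_zero]

variable {N ι κ μ : Type*} [Fintype N] [Fintype ι] [Fintype κ] [Fintype μ]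

section TrivialStar

variable {R : Type*} [CommRing R] [PartialOrder R] [StarRing R] [TrivialStar R]

lemma PosDef.dotProduct_mulVec_pos' {A : Matrix N N R} (hA : A.PosDef) {x : N → R} (hx : x ≠ 0) :
    0 < x ⬝ᵥ A *ᵥ x := by
  simpa using hA.dotProduct_mulVec_pos hx

lemma PosSemidef.dotProduct_mulVec_nonneg' {A : Matrix N N R} (hA : A.PosSemidef) (x : N → R) :
    0 ≤ x ⬝ᵥ A *ᵥ x := by
  simpa using hA.dotProduct_mulVec_nonneg x

lemma PosDef.of_dotProduct_mulVec_pos' {A : Matrix N N R} (hA : A.IsHermitian)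
    (h : ∀ x : N → R, x ≠ 0 → 0 < x ⬝ᵥ A *ᵥ x) : A.PosDef :=
  .of_dotProduct_mulVec_pos hA fun x hx => by simpa using h x hx

end TrivialStar

variable {R : Type*} [Field R] [LinearOrder R] [IsStrictOrderedRing R] [StarRing R] [TrivialStar R]

lemma PosDef.fromBlocks_zero {A : Matrix ι ι R} {D : Matrix κ κ R} (hA : A.PosDef)
    (hD : D.PosDef) : (fromBlocks A 0 0 D).PosDef := by
  refine .of_dotProduct_mulVec_pos' (hA.isHermitian.fromBlocks (by simp) hD.isHermitian) ?_
  intro x hx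
  obtain ⟨y, z, rfl⟩ : ∃ y z, x = Sum.elim y z := ⟨_, _, (Sum.elim_comp_inl_inr x).symm⟩
  rw [sumElim_dotProduct_fromBlocks_zero_mulVec]
  have hy := hA.posSemidef.dotProduct_mulVec_nonneg' y
  have hz := hD.posSemidef.dotProduct_mulVec_nonneg' z
  by_cases hy0 : y = 0
  · have hz0 : z ≠ 0 := fun hz0 => hx (by rw [hy0, hz0]; exact Sum.elim_zero_zero)
    linarith [hD.dotProduct_mulVec_pos' hz0]
  · linarith [hA.dotProduct_mulVec_pos' hy0]

lemma dotProduct_mulVec_add_self_of_dotProduct_mulVec_eq_zero {A : Matrix N N R}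
    (hA : A.IsHermitian) {u w : N → R} (h : u ⬝ᵥ A *ᵥ (u + w) = 0) :
    (u + w) ⬝ᵥ A *ᵥ (u + w) = w ⬝ᵥ A *ᵥ w - u ⬝ᵥ A *ᵥ u := by
  have hsymm : w ⬝ᵥ A *ᵥ u = u ⬝ᵥ A *ᵥ w := by
    rw [dotProduct_mulVec u, ← mulVec_transpose, ← conjTranspose_eq_transpose_of_trivial, hA.eq,
      dotProduct_comm]
  simp only [mulVec_add, dotProduct_add, add_dotProduct] at h ⊢
  linear_combination 2 * h + hsymm

variable {A : Matrix N N R} {U : Matrix N ι R} {X : Matrix N κ R}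

lemma mulVec_dotProduct_sub_pos (hU : (-(Uᵀ * A * U)).PosDef) (hX : (Xᵀ * A * X).PosDef)
    {a : ι → R} {b : κ → R} (hab : a ≠ 0 ∨ b ≠ 0) :
    0 < (X *ᵥ b) ⬝ᵥ A *ᵥ (X *ᵥ b) - (U *ᵥ a) ⬝ᵥ A *ᵥ (U *ᵥ a) := by
  have hUa : ∀ a, a ≠ 0 → (U *ᵥ a) ⬝ᵥ A *ᵥ (U *ᵥ a) < 0 := fun a ha => by
    have := hU.dotProduct_mulVec_pos' ha
    rwa [neg_mulVec, dotProduct_neg, dotProduct_transpose_mul_mul_mulVec, neg_pos] at this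
  have hXb : ∀ b, b ≠ 0 → 0 < (X *ᵥ b) ⬝ᵥ A *ᵥ (X *ᵥ b) := fun b hb => by
    simpa only [dotProduct_transpose_mul_mul_mulVec] using hX.dotProduct_mulVec_pos' hb
  rcases eq_or_ne a 0 with rfl | ha
  · simpa using hXb b (hab.resolve_left (not_not.mpr rfl))
  · rcases eq_or_ne b 0 with rfl | hb
    · simpa using hUa a ha
    · linarith [hUa a ha, hXb b hb]

lemma mulVec_add_mulVec_surjective (hcard : Fintype.card ι + Fintype.card κ = Fintype.card N)
    (hU : (-(Uᵀ * A * U)).PosDef) (hX : (Xᵀ * A * X).PosDef) (x : N → R) :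
    ∃ a b, U *ᵥ a + X *ᵥ b = x := by
  have hinj : Function.Injective (fromCols U X).mulVecLin := by
    rw [← LinearMap.ker_eq_bot, LinearMap.ker_eq_bot']
    intro c hc
    obtain ⟨a, b, rfl⟩ : ∃ a b, c = Sum.elim a b := ⟨_, _, (Sum.elim_comp_inl_inr c).symm⟩
    rw [mulVecLin_apply, fromCols_mulVec_sumElim, add_eq_zero_iff_eq_neg] at hc
    by_contra hab
    have hpos := mulVec_dotProduct_sub_pos hU hX (a := a) (b := b) (by
      contrapose! hab
      rw [hab.1, hab.2, Sum.elim_zero_zero])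
    rw [hc, mulVec_neg, dotProduct_neg, neg_dotProduct, neg_neg, sub_self] at hpos
    exact lt_irrefl 0 hpos
  have hrank : Module.finrank R (ι ⊕ κ → R) = Module.finrank R (N → R) := by
    simp [hcard]
  obtain ⟨c, hc⟩ := (LinearMap.injective_iff_surjective_of_finrank_eq_finrank hrank).mp hinj x
  exact ⟨c ∘ Sum.inl, c ∘ Sum.inr, by rwa [← fromCols_mulVec_sumElim, Sum.elim_comp_inl_inr]⟩

variable [DecidableEq N]

theorem posDef_transpose_mul_inv_mul_of_inertia {V : Matrix N μ R} (hA : A.IsHermitian)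
    (hAu : IsUnit A) (hcard : Fintype.card ι + Fintype.card κ = Fintype.card N)
    (hU : (-(Uᵀ * A * U)).PosDef) (hX : (Xᵀ * A * X).PosDef) (hUV : Uᵀ * V = 0)
    (hV : Function.Injective V.mulVec) : (Vᵀ * A⁻¹ * V).PosDef := by
  refine .of_dotProduct_mulVec_pos' ?_ fun y hy => ?_
  · simpa [conjTranspose_eq_transpose_of_trivial] using isHermitian_conjTranspose_mul_mul V hA.inv
  have hdet : IsUnit A.det := (isUnit_iff_isUnit_det A).mp hAu
  obtain ⟨x, hAx⟩ : ∃ x, A *ᵥ x = V *ᵥ y :=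
    ⟨A⁻¹ *ᵥ (V *ᵥ y), by rw [mulVec_mulVec, mul_nonsing_inv _ hdet, one_mulVec]⟩
  have hx : x ≠ 0 := by
    rintro rfl
    exact hy (hV (by rw [← hAx, mulVec_zero, mulVec_zero]))
  have hval : y ⬝ᵥ (Vᵀ * A⁻¹ * V) *ᵥ y = x ⬝ᵥ A *ᵥ x := by
    rw [dotProduct_transpose_mul_mul_mulVec, ← hAx, mulVec_mulVec, nonsing_inv_mul _ hdet,
      one_mulVec, dotProduct_comm]
  obtain ⟨a, b, rfl⟩ := mulVec_add_mulVec_surjective hcard hU hX x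
  have horth : (U *ᵥ a) ⬝ᵥ A *ᵥ (U *ᵥ a + X *ᵥ b) = 0 := by
    rw [hAx, dotProduct_comm, dotProduct_mulVec, ← mulVec_transpose, mulVec_mulVec, hUV,
      zero_mulVec, zero_dotProduct]
  rw [hval, dotProduct_mulVec_add_self_of_dotProduct_mulVec_eq_zero hA horth]
  refine mulVec_dotProduct_sub_pos hU hX ?_
  contrapose! hx
  rw [hx.1, hx.2, mulVec_zero, mulVec_zero, add_zero]

theorem posDef_neg_submatrix_inv_of_inertia (hA : A.IsHermitian) (hAu : IsUnit A) {f : ι → N}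
    {g : κ → N} (hfg : ∀ i j, f i ≠ g j) (hg : Function.Injective g)
    (hcard : Fintype.card ι + Fintype.card κ = Fintype.card N)
    (hf : (A.submatrix f f).PosDef) (hgneg : (-(A.submatrix g g)).PosDef) :
    (-(A⁻¹.submatrix g g)).PosDef := by
  have hUV : ((1 : Matrix N N R).submatrix id f)ᵀ * (1 : Matrix N N R).submatrix id g = 0 := by
    rw [← Matrix.mul_one (_ᵀ), transpose_submatrix_one_mul_mul_submatrix_one]
    ext i j
    simp [hfg]
  have := posDef_transpose_mul_inv_mul_of_inertia hA.neg hAu.neg hcard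
    (U := (1 : Matrix N N R).submatrix id f) (X := (1 : Matrix N N R).submatrix id g)
    (by rwa [transpose_submatrix_one_mul_mul_submatrix_one, submatrix_neg, Pi.neg_apply,
      Pi.neg_apply, neg_neg])
    (by rwa [transpose_submatrix_one_mul_mul_submatrix_one]) hUV
    (submatrix_one_mulVec_injective hg)
  rwa [transpose_submatrix_one_mul_mul_submatrix_one, inv_neg] at this

end Matrix

variable {n m d : ℕ}

def flipEquiv : RevIdx n m d ≃ Idx n m d where
  toFun := flipIdx
  invFun
    | .inl u => .inr (.inr (.inr u))
    | .inr (.inl a) => .inr (.inr (.inl a))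
    | .inr (.inr (.inl i)) => .inr (.inl i)
    | .inr (.inr (.inr b)) => .inl b
  left_inv := by rintro (b | i | a | u) <;> rfl
  right_inv := by rintro (u | a | i | b) <;> rfl

def phiEquiv : OmIdx n m d ≃ EtaIdx n ⊕ (RevIdx n m d ⊕ Idx n m d) where
  toFun := phiIdx
  invFun
    | .inl (.inl u) => .inl (.inl u)
    | .inl (.inr a) => .inl (.inr (.inl a))
    | .inr (.inl (.inl b)) => .inl (.inr (.inr b))
    | .inr (.inl (.inr v)) => .inr (.inl v)
    | .inr (.inr q) => .inr (.inr q)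
  left_inv := by rintro ((u | a | b) | v | q) <;> rfl
  right_inv := by rintro ((u | a) | (b | v) | q) <;> rfl

lemma leadIdx_injective : Function.Injective (leadIdx (n := n) (m := m) (d := d)) := by
  rintro (u | a | i) (u' | a' | i') h <;> cases h <;> rfl

lemma tailIdx_injective : Function.Injective (tailIdx (n := n) (m := m) (d := d)) := by
  intro b b' h
  cases h
  rfl

lemma leadIdx_ne_tailIdx (l : Unit ⊕ (Fin n ⊕ Fin m)) (b : Fin d) : leadIdx l ≠ tailIdx b := by
  rcases l with u | a | i <;> nofun

lemma card_lead_add_card_tail : Fintype.card (Unit ⊕ (Fin n ⊕ Fin m)) + Fintype.card (Fin d) =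
    Fintype.card (Idx n m d) := by
  simp only [Fintype.card_sum, Fintype.card_unit, Fintype.card_fin]
  omega

lemma card_tabIdx_add_card_leadQ : Fintype.card (TabIdx n d) +
    Fintype.card ((Unit ⊕ (Fin n ⊕ Fin m)) ⊕ Idx n m d) = Fintype.card (OmIdx n m d) := by
  simp only [Fintype.card_sum, Fintype.card_unit, Fintype.card_fin]
  omega

lemma card_wIdx_add_card_etaTail : Fintype.card (WIdx n m d) + Fintype.card (EtaIdx n ⊕ Fin d) =
    Fintype.card (OmIdx n m d) := by
  simp only [Fintype.card_sum, Fintype.card_unit, Fintype.card_fin]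
  omega

def leadQIdx : (Unit ⊕ (Fin n ⊕ Fin m)) ⊕ Idx n m d → OmIdx n m d
  | .inl (.inl u) => .inr (.inl (.inr (.inr u)))
  | .inl (.inr (.inl a)) => .inr (.inl (.inr (.inl a)))
  | .inl (.inr (.inr i)) => .inr (.inl (.inl i))
  | .inr q => .inr (.inr q)

def etaTailIdx : EtaIdx n ⊕ Fin d → OmIdx n m d
  | .inl (.inl u) => .inl (.inl u)
  | .inl (.inr a) => .inl (.inr (.inl a))
  | .inr b => .inl (.inr (.inr b))

section calP

variable (P : Matrix (EtaIdx n) (EtaIdx n) ℝ) (M Q : Matrix (Idx n m d) (Idx n m d) ℝ)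

lemma calP_eq_submatrix : calP P M Q =
    (fromBlocks (-P) 0 0 (fromBlocks (M.submatrix flipEquiv flipEquiv) 0 0 Q)).submatrix
      phiEquiv phiEquiv := rfl

lemma calP_submatrix_leadQIdx : (calP P M Q).submatrix leadQIdx leadQIdx =
    fromBlocks (M.submatrix leadIdx leadIdx) 0 0 Q := by
  ext (((u | a | i) | q)) (((u' | a' | i') | q')) <;> rfl

lemma calP_submatrix_etaTailIdx : (calP P M Q).submatrix etaTailIdx etaTailIdx =
    fromBlocks (-P) 0 0 (M.submatrix tailIdx tailIdx) := by
  ext ((u | a) | b) ((u' | a') | b') <;> rfl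

variable {P M Q}

lemma isHermitian_calP (hP : P.IsHermitian) (hM : M.IsHermitian) (hQ : Q.IsHermitian) :
    (calP P M Q).IsHermitian := by
  rw [calP_eq_submatrix]
  exact (hP.neg.fromBlocks (by simp) ((hM.submatrix _).fromBlocks (by simp) hQ)).submatrix _

lemma calP_mul_calP_inv (hP : IsUnit P) (hM : IsUnit M) (hQ : IsUnit Q) :
    calP P M Q * calP P⁻¹ M⁻¹ Q⁻¹ = 1 := by
  rw [calP_eq_submatrix, calP_eq_submatrix, submatrix_mul_equiv, fromBlocks_multiply,
    fromBlocks_multiply, submatrix_mul_equiv, neg_mul_neg]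
  simp [mul_nonsing_inv _ ((isUnit_iff_isUnit_det _).mp hP),
    mul_nonsing_inv _ ((isUnit_iff_isUnit_det _).mp hM),
    mul_nonsing_inv _ ((isUnit_iff_isUnit_det _).mp hQ)]

lemma inv_calP (hP : IsUnit P) (hM : IsUnit M) (hQ : IsUnit Q) :
    (calP P M Q)⁻¹ = calP P⁻¹ M⁻¹ Q⁻¹ :=
  inv_eq_right_inv (calP_mul_calP_inv hP hM hQ)

lemma isUnit_calP (hP : IsUnit P) (hM : IsUnit M) (hQ : IsUnit Q) : IsUnit (calP P M Q) :=
  (isUnit_iff_isUnit_det _).mpr (isUnit_det_of_right_inverse (calP_mul_calP_inv hP hM hQ))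

end calP

section calW

variable (k1 : Fin m → ℝ) (K2 : Matrix (Fin m) (Fin n) ℝ)

def etaVec (z : TabIdx n d → ℝ) : EtaIdx n → ℝ
  | .inl u => z (.inl u)
  | .inr a => z (.inr (.inl a))

def xiVec (z : TabIdx n d → ℝ) : Idx n m d → ℝ
  | .inl u => z (.inl u)
  | .inr (.inl a) => z (.inr (.inl a))
  | .inr (.inr (.inl i)) => k1 i * z (.inl ()) + ∑ j, K2 i j * z (.inr (.inl j))
  | .inr (.inr (.inr b)) => z (.inr (.inr b))

lemma calW_mulVec_comp_phiEquiv_symm (z : TabIdx n d → ℝ) :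
    (calW k1 K2 *ᵥ z) ∘ phiEquiv.symm =
      Sum.elim (etaVec z) (Sum.elim (xiVec k1 K2 z ∘ flipEquiv) (xiVec k1 K2 z)) := by
  funext I
  rcases I with (u | a) | ((b | i | a | u) | (u | a | i | b)) <;>
    simp [calW, Wmat, phiEquiv, flipEquiv, flipIdx, etaVec, xiVec, mulVec, dotProduct,
      Fintype.sum_sum_type, ite_mul, Finset.sum_ite_eq]

lemma calW_mulVec_dotProduct_calP_mulVec (P : Matrix (EtaIdx n) (EtaIdx n) ℝ)
    (M Q : Matrix (Idx n m d) (Idx n m d) ℝ) (z : TabIdx n d → ℝ) :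
    (calW k1 K2 *ᵥ z) ⬝ᵥ calP P M Q *ᵥ (calW k1 K2 *ᵥ z) =
      -(etaVec z ⬝ᵥ P *ᵥ etaVec z) +
        (xiVec k1 K2 z ⬝ᵥ M *ᵥ xiVec k1 K2 z + xiVec k1 K2 z ⬝ᵥ Q *ᵥ xiVec k1 K2 z) := by
  rw [calP_eq_submatrix, dotProduct_submatrix_equiv_mulVec, calW_mulVec_comp_phiEquiv_symm,
    sumElim_dotProduct_fromBlocks_zero_mulVec, sumElim_dotProduct_fromBlocks_zero_mulVec,
    dotProduct_submatrix_equiv_mulVec, neg_mulVec, dotProduct_neg]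
  simp [Function.comp_assoc]

lemma calW_transpose_mul_calD : (calW (d := d) k1 K2)ᵀ * calD (d := d) k1 K2 = 0 := by
  rw [calW, calD, transpose_fromRows, transpose_one, fromCols_mul_fromRows]
  simp

lemma calW_mulVec_injective : Function.Injective (calW (d := d) k1 K2).mulVec := by
  intro z z' h
  simpa [calW, fromRows_mulVec] using congrArg (fun w => w ∘ Sum.inl) h

lemma calD_mulVec_injective : Function.Injective (calD (d := d) k1 K2).mulVec := by
  intro y y' h
  simpa [calD, fromRows_mulVec, neg_mulVec] using congrArg (fun w => w ∘ Sum.inr) h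

end calW

def PrimalLMI (P : Matrix (EtaIdx n) (EtaIdx n) ℝ) (M Q : Matrix (Idx n m d) (Idx n m d) ℝ)
    (k1 : Fin m → ℝ) (K2 : Matrix (Fin m) (Fin n) ℝ) : Prop :=
  (-((calW (d := d) k1 K2)ᵀ * calP P M Q * calW (d := d) k1 K2)).PosDef

def DualLMI (P : Matrix (EtaIdx n) (EtaIdx n) ℝ) (M Q : Matrix (Idx n m d) (Idx n m d) ℝ)
    (k1 : Fin m → ℝ) (K2 : Matrix (Fin m) (Fin n) ℝ) : Prop :=
  ((calD (d := d) k1 K2)ᵀ * (calP P M Q)⁻¹ * calD (d := d) k1 K2).PosDef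

section Primal

variable {P : Matrix (EtaIdx n) (EtaIdx n) ℝ} {M Q : Matrix (Idx n m d) (Idx n m d) ℝ}
  {k1 : Fin m → ℝ} {K2 : Matrix (Fin m) (Fin n) ℝ}

lemma PrimalLMI.quadForm_xiVec_lt_quadForm_etaVec (hprim : PrimalLMI P M Q k1 K2)
    {z : TabIdx n d → ℝ} (hz : z ≠ 0) :
    xiVec k1 K2 z ⬝ᵥ M *ᵥ xiVec k1 K2 z + xiVec k1 K2 z ⬝ᵥ Q *ᵥ xiVec k1 K2 z <
      etaVec z ⬝ᵥ P *ᵥ etaVec z := by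
  have := hprim.dotProduct_mulVec_pos' hz
  rw [neg_mulVec, dotProduct_neg, dotProduct_transpose_mul_mul_mulVec,
    calW_mulVec_dotProduct_calP_mulVec] at this
  linarith

lemma PrimalLMI.posDef_P (hprim : PrimalLMI P M Q k1 K2) (hP : P.IsHermitian)
    (hreg1 : (M.submatrix leadIdx leadIdx).PosDef) (hQ : Q.PosSemidef) : P.PosDef := by
  refine .of_dotProduct_mulVec_pos' hP fun η hη => ?_
  let z : TabIdx n d → ℝ := Sum.elim (fun u => η (.inl u)) (Sum.elim (fun a => η (.inr a)) 0)
  have hηz : etaVec z = η := by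
    funext e
    rcases e with u | a <;> rfl
  have hz : z ≠ 0 := by
    rintro hz
    exact hη (by rw [← hηz, hz]; funext e; rcases e <;> rfl)
  have hM : xiVec k1 K2 z ⬝ᵥ M *ᵥ xiVec k1 K2 z =
      (xiVec k1 K2 z ∘ leadIdx) ⬝ᵥ M.submatrix leadIdx leadIdx *ᵥ (xiVec k1 K2 z ∘ leadIdx) := by
    refine dotProduct_mulVec_eq_submatrix_of_eq_zero M leadIdx_injective ?_
    rintro (u | a | i | b) hi
    · exact absurd ⟨.inl u, rfl⟩ hi
    · exact absurd ⟨.inr (.inl a), rfl⟩ hi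
    · exact absurd ⟨.inr (.inr i), rfl⟩ hi
    · rfl
  have := hprim.quadForm_xiVec_lt_quadForm_etaVec hz
  rw [hηz, hM] at this
  linarith [hreg1.posSemidef.dotProduct_mulVec_nonneg' (xiVec k1 K2 z ∘ leadIdx),
    hQ.dotProduct_mulVec_nonneg' (xiVec k1 K2 z)]

lemma PrimalLMI.neg_submatrix_tailIdx_posDef (hprim : PrimalLMI P M Q k1 K2)
    (hM : M.IsHermitian) (hQ : Q.PosSemidef) : (-(M.submatrix tailIdx tailIdx)).PosDef := by
  refine .of_dotProduct_mulVec_pos' (hM.submatrix _).neg fun b hb => ?_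
  let z : TabIdx n d → ℝ := Sum.elim 0 (Sum.elim 0 b)
  have hz : z ≠ 0 := fun hz => hb (funext fun j => congrFun hz (.inr (.inr j)))
  have hηz : etaVec z = 0 := by
    funext e
    rcases e with u | a <;> rfl
  have hM : xiVec k1 K2 z ⬝ᵥ M *ᵥ xiVec k1 K2 z = b ⬝ᵥ M.submatrix tailIdx tailIdx *ᵥ b := by
    refine dotProduct_mulVec_eq_submatrix_of_eq_zero M tailIdx_injective ?_
    rintro (u | a | i | b) hi
    · rfl
    · rfl
    · simp [xiVec, z]
    · exact absurd ⟨b, rfl⟩ hi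
  have := hprim.quadForm_xiVec_lt_quadForm_etaVec hz
  rw [hηz, hM, zero_dotProduct] at this
  rw [neg_mulVec, dotProduct_neg]
  linarith [hQ.dotProduct_mulVec_nonneg' (xiVec k1 K2 z)]

lemma PrimalLMI.neg_submatrix_inv_tailIdx_posDef (hprim : PrimalLMI P M Q k1 K2)
    (hM : M.IsHermitian) (hMu : IsUnit M) (hreg1 : (M.submatrix leadIdx leadIdx).PosDef)
    (hQ : Q.PosSemidef) : (-(M⁻¹.submatrix tailIdx tailIdx)).PosDef :=
  posDef_neg_submatrix_inv_of_inertia hM hMu leadIdx_ne_tailIdx tailIdx_injective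
    card_lead_add_card_tail hreg1
    (hprim.neg_submatrix_tailIdx_posDef hM hQ)

lemma PrimalLMI.dualLMI (hprim : PrimalLMI P M Q k1 K2) (hcalP : (calP P M Q).IsHermitian)
    (hcalPu : IsUnit (calP P M Q)) (hreg1 : (M.submatrix leadIdx leadIdx).PosDef)
    (hreg2 : Q.PosDef) : DualLMI P M Q k1 K2 :=
  posDef_transpose_mul_inv_mul_of_inertia hcalP hcalPu card_tabIdx_add_card_leadQ hprim
    (X := (1 : Matrix _ _ ℝ).submatrix id leadQIdx)
    (by rw [transpose_submatrix_one_mul_mul_submatrix_one, calP_submatrix_leadQIdx]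
        exact hreg1.fromBlocks_zero hreg2)
    (calW_transpose_mul_calD k1 K2) (calD_mulVec_injective k1 K2)

end Primal

lemma DualLMI.primalLMI {P : Matrix (EtaIdx n) (EtaIdx n) ℝ}
    {M Q : Matrix (Idx n m d) (Idx n m d) ℝ} {k1 : Fin m → ℝ} {K2 : Matrix (Fin m) (Fin n) ℝ}
    (hdual : DualLMI P M Q k1 K2) (hcalP : (calP P M Q).IsHermitian)
    (hcalPu : IsUnit (calP P M Q)) (hinv : (calP P M Q)⁻¹ = calP P⁻¹ M⁻¹ Q⁻¹)
    (hPinv : P⁻¹.PosDef) (hMinv : (-(M⁻¹.submatrix tailIdx tailIdx)).PosDef) :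
    PrimalLMI P M Q k1 K2 := by
  have hX : (-(calP P M Q)⁻¹).submatrix etaTailIdx etaTailIdx =
      fromBlocks P⁻¹ 0 0 (-(M⁻¹.submatrix tailIdx tailIdx)) := by
    rw [hinv, submatrix_neg, Pi.neg_apply, Pi.neg_apply, calP_submatrix_etaTailIdx, fromBlocks_neg]
    simp only [neg_neg, neg_zero]
  have := posDef_transpose_mul_inv_mul_of_inertia hcalP.inv.neg
    (isUnit_nonsing_inv_iff.mpr hcalPu).neg card_wIdx_add_card_etaTail
    (U := calD k1 K2) (X := (1 : Matrix _ _ ℝ).submatrix id etaTailIdx)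
    (by rwa [Matrix.mul_neg, Matrix.neg_mul, neg_neg])
    (by rw [transpose_submatrix_one_mul_mul_submatrix_one, hX]
        exact hPinv.fromBlocks_zero hMinv)
    (by rw [← transpose_transpose (calW k1 K2), ← transpose_mul, calW_transpose_mul_calD,
      transpose_zero])
    (calW_mulVec_injective k1 K2)
  rwa [Matrix.inv_neg, nonsing_inv_nonsing_inv _ ((isUnit_iff_isUnit_det _).mp hcalPu),
    Matrix.mul_neg, Matrix.neg_mul] at this

theorem backward_pass_primal_dual_equivalence_general
    (n m d : ℕ)
    (P : Matrix (EtaIdx n) (EtaIdx n) ℝ)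
    (hPsymm : P.IsSymm)
    (M Q : Matrix (Idx n m d) (Idx n m d) ℝ)
    (hMsymm : M.IsSymm) (hMinv : IsUnit M.det)
    (k1 : Fin m → ℝ) (K2 : Matrix (Fin m) (Fin n) ℝ)
    (hreg1 : (M.submatrix (leadIdx (n := n) (m := m) (d := d))
        (leadIdx (n := n) (m := m) (d := d))).PosDef)
    (hreg2 : Q.PosDef) :
    (-((calW (n := n) (m := m) (d := d) k1 K2)ᵀ * calP P M Q *
        calW (n := n) (m := m) (d := d) k1 K2)).PosDef ↔
      (((calD (n := n) (m := m) (d := d) k1 K2)ᵀ * (calP P M Q)⁻¹ *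
          calD (n := n) (m := m) (d := d) k1 K2).PosDef ∧
        (P⁻¹).PosDef ∧
        (-((M⁻¹).submatrix (tailIdx (n := n) (m := m) (d := d))
            (tailIdx (n := n) (m := m) (d := d)))).PosDef) := by
  have hP : P.IsHermitian := isHermitian_iff_isSymm.mpr hPsymm
  have hM : M.IsHermitian := isHermitian_iff_isSymm.mpr hMsymm
  have hMu : IsUnit M := (isUnit_iff_isUnit_det M).mpr hMinv
  have hcalP := isHermitian_calP hP hM hreg2.isHermitian
  constructor
  · intro hprim
    have hPpos := PrimalLMI.posDef_P hprim hP hreg1 hreg2.posSemidef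
    exact ⟨PrimalLMI.dualLMI hprim hcalP (isUnit_calP hPpos.isUnit hMu hreg2.isUnit) hreg1 hreg2,
      hPpos.inv, PrimalLMI.neg_submatrix_inv_tailIdx_posDef hprim hM hMu hreg1 hreg2.posSemidef⟩
  · rintro ⟨hdual, hPinv, hMtail⟩
    have hPu : IsUnit P := (posDef_inv_iff.mp hPinv).isUnit
    exact DualLMI.primalLMI hdual hcalP (isUnit_calP hPu hMu hreg2.isUnit)
      (inv_calP hPu hMu hreg2.isUnit) hPinv hMtail

/-- **Primal–dual equivalence of the backward-pass LMI** (Section 4.2 of the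
paper): under the regularity condition (15), the primal matrix inequality
`𝒲ᵀ𝒫𝒲 ≺ 0` holds iff the dual inequality `𝒟ᵀ𝒫⁻¹𝒟 ≻ 0` holds together with
`P⁻¹ ≻ 0` and negative definiteness of the `(δw,δw)` block of `M⁻¹`. -/
theorem backward_pass_primal_dual_equivalence
    (n m d : ℕ)
    (P : Matrix (EtaIdx n) (EtaIdx n) ℝ)
    (hPsymm : P.IsSymm) (hPinv : IsUnit P.det)
    (M Q : Matrix (Idx n m d) (Idx n m d) ℝ)
    (hMsymm : M.IsSymm) (hMinv : IsUnit M.det)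
    (hQsymm : Q.IsSymm) (hQinv : IsUnit Q.det)
    (k1 : Fin m → ℝ) (K2 : Matrix (Fin m) (Fin n) ℝ)
    (hreg1 : (M.submatrix (leadIdx (n := n) (m := m) (d := d))
        (leadIdx (n := n) (m := m) (d := d))).PosDef)
    (hreg2 : Q.PosDef) :
    (-((calW (n := n) (m := m) (d := d) k1 K2)ᵀ * calP P M Q *
        calW (n := n) (m := m) (d := d) k1 K2)).PosDef ↔
      (((calD (n := n) (m := m) (d := d) k1 K2)ᵀ * (calP P M Q)⁻¹ *
          calD (n := n) (m := m) (d := d) k1 K2).PosDef ∧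
        (P⁻¹).PosDef ∧
        (-((M⁻¹).submatrix (tailIdx (n := n) (m := m) (d := d))
            (tailIdx (n := n) (m := m) (d := d)))).PosDef) :=
  backward_pass_primal_dual_equivalence_general n m d P hPsymm M Q hMsymm hMinv k1 K2 hreg1 hreg2
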